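/- Let (A,μ,α) be a Hom-alternative algebra. Then the Hom-Bruck-Kleinfeld function f(w,x,y,z) = as(wx,α(y),α(z)) − as(x,y,z)α²(w) − α²(x)·as(w,y,z) is an alternating multilinear function of its four arguments. -/
import Mathlib


variable {K A : Type*} [Field K] [CharZero K] [AddCommGroup A] [Module K A]

/-- Hom-associator of a multiplication μ with twisting map α. -/
def homAs (μ : A →ₗ[K] A →ₗ[K] A) (α : A →ₗ[K] A) (x y z : A) : A :=
  μ (μ x y) (α z) - μ (α x) (μ y z)

/-- The Hom-Bruck-Kleinfeld function. -/
def homBK (μ : A →ₗ[K] A →ₗ[K] A) (α : A →ₗ[K] A) (w x y z : A) : A :=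
  homAs μ α (μ w x) (α y) (α z) - μ (homAs μ α x y z) (α (α w))
    - μ (α (α x)) (homAs μ α w y z)

section Aux

set_option linter.unusedSectionVars false

variable (μ : A →ₗ[K] A →ₗ[K] A) (α : A →ₗ[K] A)

/-- Skew-symmetry of the Hom-associator in the first two arguments. -/
lemma homAs_skew12 (h1 : ∀ x y : A, homAs μ α x x y = 0) (x y z : A) :
    homAs μ α y x z = - homAs μ α x y z := by
  have h := h1 (x + y) z
  have hx := h1 x z
  have hy := h1 y z
  simp only [homAs, map_add, LinearMap.add_apply] at h hx hy ⊢
  linear_combination (norm := abel) h - hx - hy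

/-- Skew-symmetry of the Hom-associator in the last two arguments. -/
lemma homAs_skew23 (h2 : ∀ x y : A, homAs μ α x y y = 0) (x y z : A) :
    homAs μ α x z y = - homAs μ α x y z := by
  have h := h2 x (y + z)
  have hy := h2 x y
  have hz := h2 x z
  simp only [homAs, map_add, LinearMap.add_apply] at h hy hz ⊢
  linear_combination (norm := abel) h - hy - hz

/-- Cyclic symmetry of the Hom-associator. -/
lemma homAs_cyc (h1 : ∀ x y : A, homAs μ α x x y = 0)
    (h2 : ∀ x y : A, homAs μ α x y y = 0) (a b c : A) :
    homAs μ α a b c = homAs μ α b c a := by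
  rw [homAs_skew12 μ α h1 b a c, homAs_skew23 μ α h2 b c a, neg_neg]

/-- Hom-Teichmüller identity: holds in any multiplicative Hom-algebra. -/
lemma homTeich (hmult : ∀ x y : A, α (μ x y) = μ (α x) (α y)) (w x y z : A) :
    homAs μ α (μ w x) (α y) (α z)
      = homAs μ α (α w) (μ x y) (α z) - homAs μ α (α w) (α x) (μ y z)
        + μ (α (α w)) (homAs μ α x y z) + μ (homAs μ α w x y) (α (α z)) := by
  simp only [homAs, map_sub, LinearMap.sub_apply, hmult]
  abel

/-- First key Moufang-type identity. -/
lemma homG1 (hmult : ∀ x y : A, α (μ x y) = μ (α x) (α y))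
    (h1 : ∀ x y : A, homAs μ α x x y = 0)
    (h2 : ∀ x y : A, homAs μ α x y y = 0) (w y z : A) :
    homAs μ α (α w) (μ w y) (α z) = μ (homAs μ α w y z) (α (α w)) := by
  have Ea := homTeich μ α hmult z w w y
  have Eb := homTeich μ α hmult y z w w
  simp only [h1, h2, map_zero, LinearMap.zero_apply, add_zero, zero_add, sub_zero,
    zero_sub] at Ea Eb
  rw [homAs_cyc μ α h1 h2 (μ z w) (α w) (α y)] at Ea
  rw [homAs_cyc μ α h1 h2 (α z) (μ w w) (α y),
      homAs_cyc μ α h1 h2 (μ w w) (α y) (α z)] at Ea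
  rw [homAs_cyc μ α h1 h2 (α z) (α w) (μ w y)] at Ea
  rw [homAs_cyc μ α h1 h2 (α y) (μ z w) (α w),
      homAs_cyc μ α h1 h2 (μ z w) (α w) (α y)] at Eb
  rw [homAs_cyc μ α h1 h2 y z w, homAs_cyc μ α h1 h2 z w y] at Eb
  linear_combination (norm := abel) Ea + Eb

/-- Second key Moufang-type identity. -/
lemma homG2 (hmult : ∀ x y : A, α (μ x y) = μ (α x) (α y))
    (h1 : ∀ x y : A, homAs μ α x x y = 0)
    (h2 : ∀ x y : A, homAs μ α x y y = 0)
    (h3 : ∀ x y : A, homAs μ α x y x = 0) (w y z : A) :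
    homAs μ α (α w) (α y) (μ z w) = μ (α (α w)) (homAs μ α w y z) := by
  have Ec := homTeich μ α hmult w y z w
  simp only [h3, map_zero, LinearMap.zero_apply, zero_sub] at Ec
  rw [homAs_cyc μ α h1 h2 (μ w y) (α z) (α w),
      homAs_cyc μ α h1 h2 (α z) (α w) (μ w y),
      homG1 μ α hmult h1 h2 w y z] at Ec
  rw [homAs_cyc μ α h1 h2 y z w, homAs_cyc μ α h1 h2 z w y] at Ec
  linear_combination (norm := abel) Ec

end Aux

theorem stmt6 (μ : A →ₗ[K] A →ₗ[K] A) (α : A →ₗ[K] A)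
    (hmult : ∀ x y : A, α (μ x y) = μ (α x) (α y))
    (h1 : ∀ x y : A, homAs μ α x x y = 0)
    (h2 : ∀ x y : A, homAs μ α x y y = 0)
    (h3 : ∀ x y : A, homAs μ α x y x = 0) :
    ∀ w x y z : A,
      homBK μ α w w y z = 0 ∧ homBK μ α w x w z = 0 ∧ homBK μ α w x y w = 0 ∧
      homBK μ α w x x z = 0 ∧ homBK μ α w x y x = 0 ∧ homBK μ α w x y y = 0 := by
  intro w x y z
  refine ⟨?_, ?_, ?_, ?_, ?_, ?_⟩
  · -- w = x
    have E := homTeich μ α hmult w w y z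
    simp only [h1, map_zero, LinearMap.zero_apply, add_zero, sub_zero, zero_sub] at E
    rw [homG1 μ α hmult h1 h2 w y z] at E
    rw [homBK, E]
    abel
  · -- w = y
    rw [homBK, homAs_skew12 μ α h1 (α w) (μ w x) (α z),
        homG1 μ α hmult h1 h2 w x z, homAs_skew12 μ α h1 w x z,
        h1 w z]
    simp only [map_neg, map_zero, LinearMap.neg_apply, LinearMap.zero_apply]
    abel
  · -- w = z
    rw [homBK, homAs_cyc μ α h1 h2 (μ w x) (α y) (α w),
        homAs_cyc μ α h1 h2 (α y) (α w) (μ w x),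
        homG1 μ α hmult h1 h2 w x y,
        homAs_cyc μ α h1 h2 x y w, homAs_cyc μ α h1 h2 y w x,
        h3 w y]
    simp only [map_zero, LinearMap.zero_apply]
    abel
  · -- x = y
    rw [homBK, homAs_cyc μ α h1 h2 (μ w x) (α x) (α z),
        homG2 μ α hmult h1 h2 h3 x z w,
        homAs_cyc μ α h1 h2 x z w, homAs_cyc μ α h1 h2 z w x,
        h1 x z]
    simp only [map_zero, LinearMap.zero_apply]
    abel
  · -- x = z
    rw [homBK, homAs_cyc μ α h1 h2 (μ w x) (α y) (α x),
        homAs_skew12 μ α h1 (α x) (α y) (μ w x),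
        homG2 μ α hmult h1 h2 h3 x y w,
        homAs_skew23 μ α h2 w x y, homAs_cyc μ α h1 h2 w x y,
        h3 x y]
    simp only [map_neg, map_zero, LinearMap.neg_apply, LinearMap.zero_apply]
    abel
  · -- y = z
    rw [homBK, h2 (μ w x) (α y), h2 x y, h2 w y]
    simp only [map_zero, LinearMap.zero_apply]
    abel
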